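/- Let Q be a Sylow q-subgroup of G for a prime q ≠ p, and let x be a nontrivial element of the center Z(Q) with x^q = 1. Then the vertex x^A is adjacent to z^A, the whole set Q∖{1} is contained in the single A-orbit x^A, and Q has exponent q. In particular, any two commuting nontrivial q-elements of G lie in the same A-orbit. -/

import Mathlib

open MulAction

namespace Paper

variable (A G : Type*) [Group A] [Group G] [MulDistribMulAction A G]

/-- The vertex set of the commuting graph of `A`-orbits: the `A`-orbits of
nonidentity elements of `G`, realized as nontrivial classes in the orbit quotient. -/
def Vertex :=
  {o : Quotient (MulAction.orbitRel A G) // o ≠ Quotient.mk (MulAction.orbitRel A G) (1 : G)}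

/-- The commuting graph `Γ(G,A)` of `A`-orbits: two distinct orbits are adjacent
iff they contain commuting representatives. -/
def commGraph : SimpleGraph (Vertex A G) where
  Adj u v := u ≠ v ∧ ∃ x y : G,
      Quotient.mk (MulAction.orbitRel A G) x = u.1 ∧
      Quotient.mk (MulAction.orbitRel A G) y = v.1 ∧ Commute x y
  symm := ⟨by
    rintro u v ⟨h, x, y, hx, hy, hc⟩
    exact ⟨h.symm, y, x, hy, hx, hc.symm⟩⟩
  loopless := ⟨fun u h => h.1 rfl⟩

/-- The vertex `x^A` determined by a nonidentity element `x` of `G`. -/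
def vert (x : G) (hx : x ≠ 1) : Vertex A G :=
  ⟨Quotient.mk (MulAction.orbitRel A G) x, fun h => hx (by
    obtain ⟨a, ha⟩ := MulAction.mem_orbit_iff.mp (Quotient.exact h)
    exact ha.symm.trans (smul_one a))⟩

/-- An `F`-graph: a connected graph with at most one vertex of degree at least three. -/
def IsFGraph {V : Type*} (Γ : SimpleGraph V) : Prop :=
  Γ.Connected ∧ ∀ u v : V, 3 ≤ (Γ.neighborSet u).ncard → 3 ≤ (Γ.neighborSet v).ncard → u = v

/-- A subgroup of `G` is `A`-invariant if it is stable under the action of `A`. -/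
def AInv (H : Subgroup G) : Prop := ∀ (a : A), ∀ x ∈ H, a • x ∈ H

/-- An Eppo-group: every nontrivial element has prime power order. -/
def IsEppo (H : Type*) [Group H] : Prop := ∀ x : H, x ≠ 1 → IsPrimePow (orderOf x)

/-- The `p`-core `O_p(G)`: the join of all normal `p`-subgroups of `G`
(i.e. the largest normal `p`-subgroup of a finite group `G`). -/
def pCore (p : ℕ) (G : Type*) [Group G] : Subgroup G :=
  ⨆ N : {N : Subgroup G // N.Normal ∧ IsPGroup p N}, (N : Subgroup G)

instance pCore_normal (p : ℕ) (G : Type*) [Group G] : (pCore p G).Normal := by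
  constructor
  intro x hx g
  refine Subgroup.iSup_induction (C := fun y => g * y * g⁻¹ ∈ pCore p G) _ hx ?_ ?_ ?_
  · rintro ⟨N, hN, hNp⟩ y hy
    exact Subgroup.mem_iSup_of_mem ⟨N, hN, hNp⟩ (hN.conj_mem y hy g)
  · simpa using (pCore p G).one_mem
  · intro a b ha hb
    have h : g * (a * b) * g⁻¹ = (g * a * g⁻¹) * (g * b * g⁻¹) := by group
    rw [h]; exact (pCore p G).mul_mem ha hb

/-- The Fitting subgroup `F(G)`: the join of all normal nilpotent subgroups of `G`
(i.e. the largest normal nilpotent subgroup of a finite group `G`). -/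
def fitting (G : Type*) [Group G] : Subgroup G :=
  ⨆ N : {N : Subgroup G // N.Normal ∧ Group.IsNilpotent N}, (N : Subgroup G)

instance fitting_normal (G : Type*) [Group G] : (fitting G).Normal := by
  constructor
  intro x hx g
  refine Subgroup.iSup_induction (C := fun y => g * y * g⁻¹ ∈ fitting G) _ hx ?_ ?_ ?_
  · rintro ⟨N, hN, hNn⟩ y hy
    exact Subgroup.mem_iSup_of_mem ⟨N, hN, hNn⟩ (hN.conj_mem y hy g)
  · simpa using (fitting G).one_mem
  · intro a b ha hb
    have h : g * (a * b) * g⁻¹ = (g * a * g⁻¹) * (g * b * g⁻¹) := by group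
    rw [h]; exact (fitting G).mul_mem ha hb

end Paper

section S5Aux

open MulAction Paper SimpleGraph

variable {A G : Type*} [Group A] [Group G] [MulDistribMulAction A G]

set_option linter.unusedSectionVars false

instance [Finite G] : Finite (Vertex A G) := Subtype.finite

lemma S5.orderOf_smul (a : A) (x : G) : orderOf (a • x) = orderOf x := by
  simpa using (MulDistribMulAction.toMulEquiv G a).orderOf_eq x

lemma S5.mem_orbit_of_mk_eq {x y : G}
    (h : Quotient.mk (MulAction.orbitRel A G) x = Quotient.mk (MulAction.orbitRel A G) y) :
    x ∈ orbit A y :=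
  (MulAction.orbitRel_apply).mp (Quotient.exact h)

lemma S5.mk_eq_of_mem_orbit {x y : G} (h : x ∈ orbit A y) :
    Quotient.mk (MulAction.orbitRel A G) x = Quotient.mk (MulAction.orbitRel A G) y :=
  Quotient.sound ((MulAction.orbitRel_apply).mpr h)

lemma S5.orderOf_eq_of_mk_eq {x y : G}
    (h : Quotient.mk (MulAction.orbitRel A G) x = Quotient.mk (MulAction.orbitRel A G) y) :
    orderOf x = orderOf y := by
  obtain ⟨a, ha⟩ := MulAction.mem_orbit_iff.mp (S5.mem_orbit_of_mk_eq h)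
  rw [← ha, S5.orderOf_smul]

lemma S5.vert_eq_iff {x y : G} {hx : x ≠ 1} {hy : y ≠ 1} :
    vert A G x hx = vert A G y hy ↔ x ∈ orbit A y := by
  refine Subtype.ext_iff.trans ?_
  exact ⟨fun h => S5.mem_orbit_of_mk_eq h, fun h => S5.mk_eq_of_mem_orbit h⟩

lemma S5.orderOf_eq_of_vert_eq {x y : G} {hx : x ≠ 1} {hy : y ≠ 1}
    (h : vert A G x hx = vert A G y hy) : orderOf x = orderOf y :=
  S5.orderOf_eq_of_mk_eq (Subtype.ext_iff.mp h)

lemma S5.vert_ne {x y : G} {hx : x ≠ 1} {hy : y ≠ 1} (h : orderOf x ≠ orderOf y) :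
    vert A G x hx ≠ vert A G y hy :=
  fun he => h (S5.orderOf_eq_of_vert_eq he)

lemma S5.adj_of_commute {x y : G} {hx : x ≠ 1} {hy : y ≠ 1}
    (hne : vert A G x hx ≠ vert A G y hy) (hc : Commute x y) :
    (commGraph A G).Adj (vert A G x hx) (vert A G y hy) :=
  ⟨hne, x, y, rfl, rfl, hc⟩

lemma S5.commute_smul {x y : G} (a : A) (h : Commute x y) : Commute (a • x) (a • y) := by
  unfold Commute SemiconjBy at *
  rw [← smul_mul', ← smul_mul', h]

lemma S5.exists_commute_of_adj {x : G} {hx : x ≠ 1} {v : Vertex A G}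
    (h : (commGraph A G).Adj (vert A G x hx) v) :
    ∃ (y : G) (hy : y ≠ 1), v = vert A G y hy ∧ Commute x y := by
  obtain ⟨hne, u, w, hu, hw, hc⟩ := h
  obtain ⟨a, ha⟩ := MulAction.mem_orbit_iff.mp (S5.mem_orbit_of_mk_eq hu)
  have hw1 : w ≠ 1 := by
    rintro rfl
    exact v.2 hw.symm
  have hy1 : a⁻¹ • w ≠ 1 := by
    intro h1
    apply hw1
    have : a • (a⁻¹ • w) = a • (1 : G) := congrArg (a • ·) h1
    simpa using this
  refine ⟨a⁻¹ • w, hy1, ?_, ?_⟩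
  · refine Subtype.ext ?_
    have h1 : Quotient.mk (MulAction.orbitRel A G) (a⁻¹ • w)
        = Quotient.mk (MulAction.orbitRel A G) w :=
      S5.mk_eq_of_mem_orbit (MulAction.mem_orbit w a⁻¹)
    exact (hw.symm.trans h1.symm : v.1 = _)
  · have := S5.commute_smul a⁻¹ hc
    rwa [← ha, inv_smul_smul] at this

lemma S5.prime_eq_of_dvd_pow {p q k : ℕ} (hp : p.Prime) (hq : q.Prime) (h : p ∣ q ^ k) :
    p = q :=
  (Nat.prime_dvd_prime_iff_eq hp hq).mp (hp.dvd_of_dvd_pow h)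

section FiniteG

variable [Finite G]

lemma S5.exists_primePart {r : ℕ} (hr : r.Prime) {g : G} (hdvd : r ∣ orderOf g) :
    ∃ (m e : ℕ), 1 ≤ e ∧ orderOf (g ^ m) = r ^ e := by
  have hg0 : orderOf g ≠ 0 := (orderOf_pos g).ne'
  refine ⟨ordCompl[r] (orderOf g), (orderOf g).factorization r,
    hr.factorization_pos_of_dvd hg0 hdvd, ?_⟩
  rw [orderOf_pow, Nat.gcd_eq_right (Nat.ordCompl_dvd _ _)]
  exact Nat.div_eq_of_eq_mul_left (Nat.ordCompl_pos r hg0)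
    (Nat.ordProj_mul_ordCompl_eq_self (orderOf g) r).symm

lemma S5.deg_le_two {z : G} {hz1 : z ≠ 1} (hF : IsFGraph (commGraph A G))
    (hsing : 3 ≤ ((commGraph A G).neighborSet (vert A G z hz1)).ncard)
    {u : Vertex A G} (hu : u ≠ vert A G z hz1) :
    ((commGraph A G).neighborSet u).ncard ≤ 2 := by
  by_contra h
  exact hu (hF.2 u _ (by omega) hsing)

lemma S5.pair_eq_neighborSet {u v w : Vertex A G} {z : G} {hz1 : z ≠ 1}
    (hF : IsFGraph (commGraph A G))
    (hsing : 3 ≤ ((commGraph A G).neighborSet (vert A G z hz1)).ncard)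
    (hu : u ≠ vert A G z hz1) (huv : (commGraph A G).Adj u v) (huw : (commGraph A G).Adj u w)
    (hvw : v ≠ w) : ({v, w} : Set (Vertex A G)) = (commGraph A G).neighborSet u := by
  refine Set.eq_of_subset_of_ncard_le ?_ ?_ (Set.toFinite _)
  · intro t ht
    simp only [Set.mem_insert_iff, Set.mem_singleton_iff] at ht
    rcases ht with rfl | rfl
    · exact huv
    · exact huw
  · rw [Set.ncard_pair hvw]
    exact S5.deg_le_two hF hsing hu

lemma S5.triangle_mem {z : G} {hz1 : z ≠ 1} (hF : IsFGraph (commGraph A G))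
    (hsing : 3 ≤ ((commGraph A G).neighborSet (vert A G z hz1)).ncard)
    {a b c : Vertex A G} (hab : (commGraph A G).Adj a b) (hac : (commGraph A G).Adj a c)
    (hbc : (commGraph A G).Adj b c) :
    vert A G z hz1 = a ∨ vert A G z hz1 = b ∨ vert A G z hz1 = c := by
  by_contra hcon
  push_neg at hcon
  obtain ⟨ha, hb, hc⟩ := hcon
  have hNa := S5.pair_eq_neighborSet hF hsing (Ne.symm ha) hab hac hbc.ne
  have hNb := S5.pair_eq_neighborSet hF hsing (Ne.symm hb) hab.symm hbc hac.ne
  have hNc := S5.pair_eq_neighborSet hF hsing (Ne.symm hc) hac.symm hbc.symm hab.ne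
  have hreach : ∀ (s t : Vertex A G), (commGraph A G).Walk s t →
      (t = a ∨ t = b ∨ t = c) → (s = a ∨ s = b ∨ s = c) := by
    intro s t w
    induction w with
    | nil => exact id
    | @cons s s' t h pw ih =>
      intro ht
      have hs' := ih ht
      rcases hs' with rfl | rfl | rfl
      · have : s ∈ ({b, c} : Set (Vertex A G)) := by rw [hNa]; exact h.symm
        simp only [Set.mem_insert_iff, Set.mem_singleton_iff] at this
        tauto
      · have : s ∈ ({a, c} : Set (Vertex A G)) := by rw [hNb]; exact h.symm
        simp only [Set.mem_insert_iff, Set.mem_singleton_iff] at this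
        tauto
      · have : s ∈ ({a, b} : Set (Vertex A G)) := by rw [hNc]; exact h.symm
        simp only [Set.mem_insert_iff, Set.mem_singleton_iff] at this
        tauto
  obtain ⟨w⟩ := hF.1.preconnected (vert A G z hz1) a
  rcases hreach _ _ w (Or.inl rfl) with h | h | h
  · exact ha h
  · exact hb h
  · exact hc h

end FiniteG

lemma S5.qpow_ne_one {q k : ℕ} (hq : q.Prime) (hk : 1 ≤ k) : q ^ k ≠ 1 := by
  have := hq.one_lt
  have : 1 < q ^ k := one_lt_pow₀ (by omega) (by omega)
  omega

lemma S5.ne_of_p_dvd {p m n : ℕ} (hpn : p ∣ n) (hpm : ¬ p ∣ m) : m ≠ n := by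
  rintro rfl; exact hpm hpn

lemma S5.not_prime_dvd_pow {r q k : ℕ} (hr : r.Prime) (hq : q.Prime) (hrq : r ≠ q) :
    ¬ r ∣ q ^ k := fun h => hrq (S5.prime_eq_of_dvd_pow hr hq h)

section FiniteG2

variable [Finite G]

/-- L3': if `y` is a nontrivial `q`-element whose class is adjacent to `z^A`, then every
neighbour of `y^A` is the class of an element of order divisible by `p`. -/
lemma S5.neighbors_p_dvd {z : G} {hz1 : z ≠ 1} (hF : IsFGraph (commGraph A G))
    (hsing : 3 ≤ ((commGraph A G).neighborSet (vert A G z hz1)).ncard)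
    {p : ℕ} (hp : p.Prime) (hpz : p ∣ orderOf z)
    {q : ℕ} (hq' : q.Prime) (hqp : q ≠ p)
    {y : G} (hy1 : y ≠ 1) {t : ℕ} (hyq : orderOf y = q ^ t)
    (hadj : (commGraph A G).Adj (vert A G y hy1) (vert A G z hz1)) :
    ∀ u ∈ (commGraph A G).neighborSet (vert A G y hy1),
      ∀ (g : G) (hg : g ≠ 1), u = vert A G g hg → p ∣ orderOf g := by
  have hpq : ¬ p ∣ q ^ t := S5.not_prime_dvd_pow hp hq' (fun h => hqp h.symm)
  have ht1 : 1 ≤ t := by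
    rcases Nat.eq_zero_or_pos t with rfl | h
    · exfalso; apply hy1; rw [← orderOf_eq_one_iff, hyq, pow_zero]
    · exact h
  obtain ⟨z₂, hz2ne, hvz2, hcyz⟩ := S5.exists_commute_of_adj hadj
  have hordz2 : orderOf z₂ = orderOf z := (S5.orderOf_eq_of_vert_eq hvz2.symm)
  have hpz2 : p ∣ orderOf z₂ := hordz2 ▸ hpz
  obtain ⟨m, e, he1, hordw⟩ := S5.exists_primePart hp hpz2
  set w1 := z₂ ^ m with hw1def
  have hcyw : Commute y w1 := hcyz.pow_right m
  have hw1ne : w1 ≠ 1 := by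
    intro h1; rw [h1, orderOf_one] at hordw
    exact S5.qpow_ne_one hp he1 hordw.symm
  have hcop : Nat.Coprime (q ^ t) (p ^ e) :=
    ((Nat.coprime_primes hq' hp).mpr hqp).pow _ _
  have hordw2 : orderOf (y * w1) = q ^ t * p ^ e := by
    rw [hcyw.orderOf_mul_eq_mul_orderOf_of_coprime (by rw [hyq, hordw]; exact hcop), hyq, hordw]
  have hw2ne : y * w1 ≠ 1 := by
    intro h1; rw [h1, orderOf_one] at hordw2
    have : p ∣ (1 : ℕ) := hordw2 ▸ Dvd.dvd.mul_left (dvd_pow_self p (by omega)) _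
    exact hp.one_lt.ne' (Nat.eq_one_of_dvd_one this)
  have hpdvd1 : p ∣ orderOf w1 := by rw [hordw]; exact dvd_pow_self p (by omega)
  have hpdvd2 : p ∣ orderOf (y * w1) := by
    rw [hordw2]; exact Dvd.dvd.mul_left (dvd_pow_self p (by omega)) _
  have hne_y_w1 : vert A G y hy1 ≠ vert A G w1 hw1ne :=
    S5.vert_ne (by rw [hyq]; exact S5.ne_of_p_dvd hpdvd1 hpq)
  have hne_y_w2 : vert A G y hy1 ≠ vert A G (y * w1) hw2ne :=
    S5.vert_ne (by rw [hyq]; exact S5.ne_of_p_dvd hpdvd2 hpq)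
  have hne_w1_w2 : vert A G w1 hw1ne ≠ vert A G (y * w1) hw2ne := by
    refine S5.vert_ne ?_
    have hq1 : q ∣ orderOf (y * w1) := by
      rw [hordw2]; exact Dvd.dvd.mul_right (dvd_pow_self q (by omega)) _
    have hq2 : ¬ q ∣ orderOf w1 := by
      rw [hordw]; exact S5.not_prime_dvd_pow hq' hp hqp
    exact S5.ne_of_p_dvd hq1 hq2
  have hadj1 : (commGraph A G).Adj (vert A G y hy1) (vert A G w1 hw1ne) :=
    S5.adj_of_commute hne_y_w1 hcyw
  have hadj2 : (commGraph A G).Adj (vert A G y hy1) (vert A G (y * w1) hw2ne) :=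
    S5.adj_of_commute hne_y_w2 ((Commute.refl y).mul_right hcyw)
  have hyz : vert A G y hy1 ≠ vert A G z hz1 := by
    refine S5.vert_ne ?_
    rw [hyq]
    intro h
    exact hpq (h ▸ hpz)
  have hNy := S5.pair_eq_neighborSet hF hsing hyz hadj1 hadj2 hne_w1_w2
  intro u hu g hg hueq
  rw [← hNy] at hu
  simp only [Set.mem_insert_iff, Set.mem_singleton_iff] at hu
  rcases hu with rfl | rfl
  · have := S5.orderOf_eq_of_vert_eq hueq.symm
    rw [this, hordw]; exact dvd_pow_self p (by omega)
  · have := S5.orderOf_eq_of_vert_eq hueq.symm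
    rw [this, hordw2]; exact Dvd.dvd.mul_left (dvd_pow_self p (by omega)) _

/-- Any nontrivial `q`-element's class is adjacent to `z^A`. -/
lemma S5.adj_z_of_qelement {z : G} {hz1 : z ≠ 1} (hF : IsFGraph (commGraph A G))
    (hsing : 3 ≤ ((commGraph A G).neighborSet (vert A G z hz1)).ncard)
    {p : ℕ} (hp : p.Prime) (hpz : p ∣ orderOf z)
    {q : ℕ} (hq' : q.Prime) (hqp : q ≠ p) :
    ∀ (u v' : Vertex A G), (commGraph A G).Walk u v' → v' = vert A G z hz1 →
      ∀ (g : G) (hg : g ≠ 1) (k : ℕ), orderOf g = q ^ k → u = vert A G g hg →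
      (commGraph A G).Adj (vert A G g hg) (vert A G z hz1) := by
  intro u v' w
  induction w with
  | @nil s =>
    intro hv g hg k hk hu
    exfalso
    have : vert A G g hg = vert A G z hz1 := hu.symm.trans hv
    have hoz : orderOf z = q ^ k := by rw [← S5.orderOf_eq_of_vert_eq this, hk]
    exact (fun h => hqp h.symm) (S5.prime_eq_of_dvd_pow hp hq' (hoz ▸ hpz))
  | @cons s v₁ t h pw ih =>
    intro hv g hg k hk hu
    subst hu
    obtain ⟨y, hy1, rfl, hcgy⟩ := S5.exists_commute_of_adj h
    have hk1 : 1 ≤ k := by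
      rcases Nat.eq_zero_or_pos k with rfl | hpos
      · exfalso; apply hg; rw [← orderOf_eq_one_iff, hk, pow_zero]
      · exact hpos
    by_cases hcase : ∀ r, r.Prime → r ∣ orderOf y → r = q
    · have hy0 : orderOf y ≠ 0 := (orderOf_pos y).ne'
      have hyq : orderOf y = q ^ (orderOf y).primeFactorsList.length :=
        Nat.eq_prime_pow_of_unique_prime_dvd hy0 (fun {d} hd hdvd => hcase d hd hdvd)
      have hadjyz := ih hv y hy1 _ hyq rfl
      exfalso
      have hmem : vert A G g hg ∈ (commGraph A G).neighborSet (vert A G y hy1) := h.symm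
      have hpg : p ∣ orderOf g :=
        S5.neighbors_p_dvd hF hsing hp hpz hq' hqp hy1 hyq hadjyz _ hmem g hg rfl
      rw [hk] at hpg
      exact (fun h' => hqp h'.symm) (S5.prime_eq_of_dvd_pow hp hq' hpg)
    · push_neg at hcase
      obtain ⟨r, hr, hrdvd, hrq⟩ := hcase
      obtain ⟨m, e, he1, hordw⟩ := S5.exists_primePart hr hrdvd
      set w1 := y ^ m with hw1def
      have hcgw : Commute g w1 := hcgy.pow_right m
      have hw1ne : w1 ≠ 1 := by
        intro h1; rw [h1, orderOf_one] at hordw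
        exact S5.qpow_ne_one hr he1 hordw.symm
      have hcop : Nat.Coprime (q ^ k) (r ^ e) :=
        ((Nat.coprime_primes hq' hr).mpr (fun h' => hrq h'.symm)).pow _ _
      have hordw2 : orderOf (g * w1) = q ^ k * r ^ e := by
        rw [hcgw.orderOf_mul_eq_mul_orderOf_of_coprime (by rw [hk, hordw]; exact hcop),
          hk, hordw]
      have hrq' : ¬ r ∣ q ^ k := S5.not_prime_dvd_pow hr hq' hrq
      have hw2ne : g * w1 ≠ 1 := by
        intro h1; rw [h1, orderOf_one] at hordw2
        have : q ∣ (1 : ℕ) := hordw2 ▸ Dvd.dvd.mul_right (dvd_pow_self q (by omega)) _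
        exact hq'.one_lt.ne' (Nat.eq_one_of_dvd_one this)
      have hne_g_w1 : vert A G g hg ≠ vert A G w1 hw1ne := by
        refine S5.vert_ne ?_
        rw [hk, hordw]
        exact S5.ne_of_p_dvd (dvd_pow_self r (by omega)) hrq'
      have hne_g_w2 : vert A G g hg ≠ vert A G (g * w1) hw2ne := by
        refine S5.vert_ne ?_
        rw [hk, hordw2]
        exact S5.ne_of_p_dvd (Dvd.dvd.mul_left (dvd_pow_self r (by omega)) _) hrq'
      have hne_w1_w2 : vert A G w1 hw1ne ≠ vert A G (g * w1) hw2ne := by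
        refine S5.vert_ne ?_
        rw [hordw, hordw2]
        exact S5.ne_of_p_dvd (Dvd.dvd.mul_right (dvd_pow_self q (by omega)) _)
          (S5.not_prime_dvd_pow hq' hr (fun h' => hrq h'.symm))
      have hadj1 : (commGraph A G).Adj (vert A G g hg) (vert A G w1 hw1ne) :=
        S5.adj_of_commute hne_g_w1 hcgw
      have hadj2 : (commGraph A G).Adj (vert A G g hg) (vert A G (g * w1) hw2ne) :=
        S5.adj_of_commute hne_g_w2 ((Commute.refl g).mul_right hcgw)
      have hadj3 : (commGraph A G).Adj (vert A G w1 hw1ne) (vert A G (g * w1) hw2ne) :=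
        S5.adj_of_commute hne_w1_w2 (hcgw.symm.mul_right (Commute.refl w1))
      rcases S5.triangle_mem hF hsing hadj1 hadj2 hadj3 with h1 | h2 | h3
      · exfalso
        have hoz : orderOf z = q ^ k := by rw [S5.orderOf_eq_of_vert_eq h1, hk]
        exact (fun h' => hqp h'.symm) (S5.prime_eq_of_dvd_pow hp hq' (hoz ▸ hpz))
      · rw [← h2] at hadj1; exact hadj1
      · rw [← h3] at hadj2; exact hadj2

lemma S5.q_power_order_of_mem {q : ℕ} (hq' : q.Prime) {H : Subgroup G}
    (h : IsPGroup q H) {y : G} (hy : y ∈ H) : ∃ j, orderOf y = q ^ j := by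
  obtain ⟨k, hk⟩ := h ⟨y, hy⟩
  have hpow : y ^ q ^ k = 1 := by
    have := congrArg (Subtype.val) hk
    simpa using this
  obtain ⟨j, _, hj⟩ := (Nat.dvd_prime_pow hq').mp (orderOf_dvd_of_pow_eq_one hpow)
  exact ⟨j, hj⟩

/-- The key lemma: parts 1–3 of Statement 5 for any Sylow `q`-subgroup and any
nontrivial central element of order `q`. -/
lemma S5.key {z : G} {hz1 : z ≠ 1} (hF : IsFGraph (commGraph A G))
    (hsing : 3 ≤ ((commGraph A G).neighborSet (vert A G z hz1)).ncard)
    {p : ℕ} (hp : p.Prime) (hpz : p ∣ orderOf z)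
    {q : ℕ} (hq' : q.Prime) (hqp : q ≠ p) (Q : Sylow q G)
    (x : G) (hx1 : x ≠ 1) (hxQ : x ∈ Q) (hxZ : ∀ y ∈ Q, Commute x y) (hxq : x ^ q = 1) :
    (commGraph A G).Adj (vert A G x hx1) (vert A G z hz1) ∧
    (((Q : Subgroup G) : Set G) \ {1} ⊆ orbit A x) ∧
    (∀ y ∈ Q, y ^ q = 1) := by
  haveI : Fact q.Prime := ⟨hq'⟩
  have hordx : orderOf x = q ^ 1 := by rw [pow_one]; exact orderOf_eq_prime hxq hx1
  obtain ⟨w⟩ := hF.1.preconnected (vert A G x hx1) (vert A G z hz1)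
  have hadj : (commGraph A G).Adj (vert A G x hx1) (vert A G z hz1) :=
    S5.adj_z_of_qelement hF hsing hp hpz hq' hqp _ _ w rfl x hx1 1 hordx rfl
  have hsub : ((Q : Subgroup G) : Set G) \ {1} ⊆ orbit A x := by
    rintro y ⟨hyQ, hy1'⟩
    have hy1 : y ≠ 1 := hy1'
    by_contra hnot
    have hne : vert A G y hy1 ≠ vert A G x hx1 := by
      intro h'
      exact hnot (S5.vert_eq_iff.mp h')
    have hadjxy : (commGraph A G).Adj (vert A G x hx1) (vert A G y hy1) :=
      S5.adj_of_commute hne.symm (hxZ y hyQ)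
    have hpdy : p ∣ orderOf y :=
      S5.neighbors_p_dvd hF hsing hp hpz hq' hqp hx1 hordx hadj _ hadjxy y hy1 rfl
    obtain ⟨j, hj⟩ := S5.q_power_order_of_mem hq' Q.2 hyQ
    rw [hj] at hpdy
    exact (fun h' => hqp h'.symm) (S5.prime_eq_of_dvd_pow hp hq' hpdy)
  refine ⟨hadj, hsub, ?_⟩
  intro y hyQ
  by_cases hy1 : y = 1
  · rw [hy1, one_pow]
  · obtain ⟨a, ha⟩ := MulAction.mem_orbit_iff.mp (hsub ⟨hyQ, hy1⟩)
    rw [← ha, ← smul_pow', hxq, smul_one]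

end FiniteG2


end S5Aux


open Paper MulAction in
/-- If `Q` is a Sylow `q`-subgroup of `G` (`q ≠ p` prime) and `x` is a nontrivial
element of `Z(Q)` with `x^q = 1`, then `x^A ∼ z^A`, `Q∖{1} ⊆ x^A`, and `Q` has exponent `q`.
In particular any two commuting nontrivial `q`-elements of `G` lie in the same `A`-orbit. -/
theorem statement5 (G A : Type*) [Group G] [Finite G] [Group A] [Finite A]
    [MulDistribMulAction A G]
    (hπ : 2 ≤ (Nat.card G).primeFactors.card)
    (hF : IsFGraph (commGraph A G))
    (z : G) (hz1 : z ≠ 1)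
    (hsing : 3 ≤ ((commGraph A G).neighborSet (vert A G z hz1)).ncard)
    (p : ℕ) (hp : p.Prime) (hpz : p ∣ orderOf z)
    (q : ℕ) [Fact q.Prime] (hq : q ≠ p) (Q : Sylow q G)
    (x : G) (hx1 : x ≠ 1) (hxQ : x ∈ Q) (hxZ : ∀ y ∈ Q, Commute x y) (hxq : x ^ q = 1) :
    (commGraph A G).Adj (vert A G x hx1) (vert A G z hz1) ∧
    ((Q : Subgroup G) : Set G) \ {1} ⊆ orbit A x ∧
    (∀ y ∈ Q, y ^ q = 1) ∧
    (∀ u v : G, u ≠ 1 → v ≠ 1 → (∃ k : ℕ, orderOf u = q ^ k) →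
      (∃ k : ℕ, orderOf v = q ^ k) → Commute u v → orbit A u = orbit A v) := by
  
  classical
  have hq' : q.Prime := Fact.out
  have hqp : q ≠ p := hq
  obtain ⟨hadj, hsub, hexp⟩ :=
    S5.key (A := A) (G := G) hF hsing hp hpz hq' hqp Q x hx1 hxQ hxZ hxq
  refine ⟨hadj, hsub, hexp, ?_⟩
  intro u v hu1 hv1 hup hvp hcuv
  -- the subgroup generated by `u` and `v` is a `q`-group
  set H := Subgroup.closure ({u, v} : Set G) with hHdef
  have hcent : ∀ b ∈ H, Commute b u ∧ Commute b v := by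
    intro b hb
    refine Subgroup.closure_induction ?_ ?_ ?_ ?_ hb
    · intro w hw
      simp only [Set.mem_insert_iff, Set.mem_singleton_iff] at hw
      rcases hw with h | h <;> subst h
      · exact ⟨Commute.refl w, hcuv⟩
      · exact ⟨hcuv.symm, Commute.refl w⟩
    · exact ⟨Commute.one_left u, Commute.one_left v⟩
    · rintro a b' _ _ ⟨h1, h2⟩ ⟨h3, h4⟩
      exact ⟨h1.mul_left h3, h2.mul_left h4⟩
    · rintro a _ ⟨h1, h2⟩
      exact ⟨h1.inv_left, h2.inv_left⟩
  have hcomm : ∀ a ∈ H, ∀ b ∈ H, Commute a b := by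
    intro a ha b hb
    refine Subgroup.closure_induction ?_ ?_ ?_ ?_ ha
    · intro w hw
      simp only [Set.mem_insert_iff, Set.mem_singleton_iff] at hw
      rcases hw with h | h <;> subst h
      · exact ((hcent b hb).1).symm
      · exact ((hcent b hb).2).symm
    · exact Commute.one_left b
    · rintro a1 a2 _ _ h1 h2
      exact h1.mul_left h2
    · rintro a1 _ h1
      exact h1.inv_left
  have hpow : ∀ a ∈ H, ∃ k, a ^ q ^ k = 1 := by
    intro a ha
    refine Subgroup.closure_induction ?_ ?_ ?_ ?_ ha
    · intro w hw
      simp only [Set.mem_insert_iff, Set.mem_singleton_iff] at hw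
      rcases hw with h | h <;> subst h
      · obtain ⟨k, hk⟩ := hup
        exact ⟨k, by rw [← hk]; exact pow_orderOf_eq_one w⟩
      · obtain ⟨k, hk⟩ := hvp
        exact ⟨k, by rw [← hk]; exact pow_orderOf_eq_one w⟩
    · exact ⟨0, one_pow _⟩
    · rintro a1 a2 ha1 ha2 ⟨k, hk⟩ ⟨l, hl⟩
      refine ⟨k + l, ?_⟩
      have hc12 : Commute a1 a2 := hcomm a1 ha1 a2 ha2
      rw [hc12.mul_pow, pow_add, pow_mul, hk, one_pow, one_mul, mul_comm (q ^ k), pow_mul,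
        hl, one_pow]
    · rintro a1 _ ⟨k, hk⟩
      exact ⟨k, by rw [inv_pow, hk, inv_one]⟩
  have hH : IsPGroup q H := by
    intro g
    obtain ⟨k, hk⟩ := hpow g.1 g.2
    exact ⟨k, Subtype.ext (by simpa using hk)⟩
  obtain ⟨Q2, hQ2⟩ := hH.exists_le_sylow
  have huH : u ∈ H := Subgroup.subset_closure (by simp)
  have hvH : v ∈ H := Subgroup.subset_closure (by simp)
  have huQ2 : u ∈ Q2 := hQ2 huH
  have hvQ2 : v ∈ Q2 := hQ2 hvH
  -- find a central element of order `q` in `Q2`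
  haveI : Nontrivial ↥(Q2 : Subgroup G) :=
    nontrivial_of_ne ⟨u, huQ2⟩ 1 (fun h => hu1 (by simpa using congrArg Subtype.val h))
  have hcnt : Nontrivial (Subgroup.center ↥(Q2 : Subgroup G)) :=
    IsPGroup.center_nontrivial Q2.2
  obtain ⟨d, hd⟩ := exists_ne (1 : Subgroup.center ↥(Q2 : Subgroup G))
  set dG : G := ((d : ↥(Q2 : Subgroup G)) : G) with hdGdef
  have hdG1 : dG ≠ 1 := by
    intro h
    apply hd
    have : (d : ↥(Q2 : Subgroup G)) = 1 := Subtype.ext h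
    exact Subtype.ext this
  have hdGQ2 : dG ∈ Q2 := (d : ↥(Q2 : Subgroup G)).2
  have hdGcentral : ∀ y ∈ Q2, Commute dG y := by
    intro y hy
    have := (Subgroup.mem_center_iff.mp d.2) ⟨y, hy⟩
    have h2 := congrArg Subtype.val this
    simpa [Commute, SemiconjBy, eq_comm] using h2
  obtain ⟨m, hm⟩ := S5.q_power_order_of_mem hq' Q2.2 hdGQ2
  have hm1 : 1 ≤ m := by
    rcases Nat.eq_zero_or_pos m with rfl | h
    · exfalso; apply hdG1; rw [← orderOf_eq_one_iff, hm, pow_zero]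
    · exact h
  set x2 : G := dG ^ (q ^ (m - 1)) with hx2def
  have hx2q : x2 ^ q = 1 := by
    rw [hx2def, ← pow_mul, ← pow_succ, Nat.sub_add_cancel (by omega : 1 ≤ m), ← hm]
    exact pow_orderOf_eq_one dG
  have hx2ne : x2 ≠ 1 := by
    intro h
    have hdvd : orderOf dG ∣ q ^ (m - 1) := orderOf_dvd_of_pow_eq_one h
    rw [hm] at hdvd
    have := (Nat.pow_dvd_pow_iff_le_right hq'.one_lt).mp hdvd
    omega
  have hx2Q2 : x2 ∈ Q2 := Subgroup.pow_mem _ hdGQ2 _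
  have hx2central : ∀ y ∈ Q2, Commute x2 y := fun y hy => (hdGcentral y hy).pow_left _
  obtain ⟨_, hsub2, _⟩ :=
    S5.key (A := A) (G := G) hF hsing hp hpz hq' hqp Q2 x2 hx2ne hx2Q2 hx2central hx2q
  have hu' : u ∈ orbit A x2 := hsub2 ⟨huQ2, hu1⟩
  have hv' : v ∈ orbit A x2 := hsub2 ⟨hvQ2, hv1⟩
  rw [MulAction.orbit_eq_iff.mpr hu', MulAction.orbit_eq_iff.mpr hv']
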